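/- arXiv:2411.13137 — 2 statements merged into one kernel-verified Lean document; each statement's English description precedes it below -/
import Mathlib

section
/- Iterated smoothing converges to the kernel projection: for L symmetric PSD, 0 < α < 1, and P = α(αI + (1−α)L)⁻¹, the iterates Pᵏx converge as k → ∞ to the orthogonal projection of x onto the kernel of L. -/
/-!
In an orthonormal eigenbasis `bᵢ` of `L`, with eigenvalues `μᵢ ≥ 0`, the matrix
`P = α (α I + (1 - α) L)⁻¹` acts diagonally with eigenvalues `cᵢ = α / (α + (1 - α) μᵢ)`.
So `Pᵏ x = ∑ cᵢᵏ ⟨bᵢ, x⟩ bᵢ`, where `cᵢ = 1` if `μᵢ = 0` and `0 < cᵢ < 1` otherwise; the limit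
keeps exactly the components along the eigenvectors spanning `ker L`, and since `L` is
symmetric the other eigenvectors are orthogonal to `ker L`, so this limit is the orthogonal
projection.
-/

open Matrix Filter

section Eigenbasis

theorem Module.End.pow_apply_eq_pow_smul_of_apply_eq_smul {R M : Type*} [CommSemiring R]
    [AddCommMonoid M] [Module R M] {f : Module.End R M} {c : R} {v : M}
    (hv : f v = c • v) (k : ℕ) : (f ^ k) v = c ^ k • v := by
  induction k with
  | zero => simp
  | succ k ih => rw [pow_succ', Module.End.mul_apply, ih, map_smul, hv, smul_smul, pow_succ]

variable {𝕜 E ι : Type*} [NormedField 𝕜] [AddCommGroup E] [Module 𝕜 E] [TopologicalSpace E]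
  [IsTopologicalAddGroup E] [ContinuousSMul 𝕜 E] [Fintype ι]

theorem Module.End.tendsto_pow_apply_sum_smul_of_apply_eq_smul (f : Module.End 𝕜 E) (v : ι → E)
    (c : ι → 𝕜) (hv : ∀ i, f (v i) = c i • v i) (p : ι → Prop) [DecidablePred p]
    (hfix : ∀ i, p i → c i = 1) (hcontr : ∀ i, ¬ p i → ‖c i‖ < 1) (r : ι → 𝕜) :
    Tendsto (fun k ↦ (f ^ k) (∑ i, r i • v i)) atTop
      (nhds (∑ i, (if p i then r i else 0) • v i)) := by
  simp only [map_sum, map_smul, pow_apply_eq_pow_smul_of_apply_eq_smul (hv _), smul_smul]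
  refine tendsto_finsetSum _ fun i _ ↦ (Tendsto.smul_const ?_ _)
  by_cases hi : p i
  · simp [hi, hfix i hi]
  · simpa [hi] using (tendsto_pow_atTop_nhds_zero_of_norm_lt_one (hcontr i hi)).const_mul (r i)

end Eigenbasis

open scoped InnerProductSpace in
theorem LinearMap.IsSymmetric.starProjection_ker_eq_sum {𝕜 E ι : Type*} [RCLike 𝕜]
    [NormedAddCommGroup E] [InnerProductSpace 𝕜 E] [FiniteDimensional 𝕜 E] [Fintype ι]
    {T : E →ₗ[𝕜] E} (hT : T.IsSymmetric) (b : OrthonormalBasis ι 𝕜 E) (μ : ι → 𝕜)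
    (hb : ∀ i, T (b i) = μ i • b i) (x : E) :
    (LinearMap.ker T).starProjection x = ∑ i, (if μ i = 0 then b.repr x i else 0) • b i := by
  have hperp : ∀ i, μ i ≠ 0 → ∀ w ∈ LinearMap.ker T, ⟪b i, w⟫_𝕜 = 0 := by
    intro i hi w hw
    have := hT (b i) w
    rw [LinearMap.mem_ker.mp hw, hb i, inner_smul_left, inner_zero_right] at this
    exact (mul_eq_zero.mp this).resolve_left (by simpa using hi)
  apply Submodule.eq_starProjection_of_mem_of_inner_eq_zero
  · refine Submodule.sum_mem _ fun i _ ↦ ?_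
    by_cases hi : μ i = 0
    · simp [hb, hi]
    · simp [hi]
  · intro w hw
    nth_rw 1 [← b.sum_repr x]
    rw [← Finset.sum_sub_distrib, sum_inner]
    refine Finset.sum_eq_zero fun i _ ↦ ?_
    by_cases hi : μ i = 0
    · simp [hi]
    · simp [hi, inner_smul_left, hperp i hi w hw]

theorem Matrix.inv_mulVec_eq_smul_of_mulVec_eq_smul {n K : Type*} [Fintype n] [DecidableEq n]
    [Field K] {M : Matrix n n K} (hM : IsUnit M.det) {v : n → K} {d : K} (hd : d ≠ 0)
    (hv : M *ᵥ v = d • v) : M⁻¹ *ᵥ v = d⁻¹ • v := by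
  calc M⁻¹ *ᵥ v = M⁻¹ *ᵥ (d⁻¹ • M *ᵥ v) := by rw [hv, smul_smul, inv_mul_cancel₀ hd, one_smul]
    _ = d⁻¹ • v := by rw [mulVec_smul, mulVec_mulVec, nonsing_inv_mul _ hM, one_mulVec]

theorem abs_div_add_one_sub_mul_lt_one {α μ : ℝ} (hα : 0 < α) (hα1 : α < 1) (hμ : 0 < μ) :
    |α / (α + (1 - α) * μ)| < 1 := by
  have hgap : 0 < (1 - α) * μ := mul_pos (by linarith) hμ
  rw [abs_of_pos (by positivity), div_lt_one (by positivity)]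
  linarith

theorem Matrix.PosSemidef.smul_inv_mulVec_eq_smul_of_mulVec_eq_smul {n : Type*} [Fintype n]
    [DecidableEq n] {L : Matrix n n ℝ} (hL : L.PosSemidef) {α μ : ℝ} (hα : 0 < α) (hα1 : α ≤ 1)
    (hμ : 0 ≤ μ) {v : n → ℝ} (hv : L *ᵥ v = μ • v) :
    (α • (α • (1 : Matrix n n ℝ) + (1 - α) • L)⁻¹) *ᵥ v = (α / (α + (1 - α) * μ)) • v := by
  have hM : (α • (1 : Matrix n n ℝ) + (1 - α) • L).PosDef :=
    (PosDef.one.smul hα).add_posSemidef (hL.smul (by linarith))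
  have hMv : (α • (1 : Matrix n n ℝ) + (1 - α) • L) *ᵥ v = (α + (1 - α) * μ) • v := by
    rw [add_mulVec, smul_mulVec, smul_mulVec, one_mulVec, hv, smul_smul, add_smul]
  have hd : α + (1 - α) * μ ≠ 0 := by nlinarith
  rw [smul_mulVec, inv_mulVec_eq_smul_of_mulVec_eq_smul ((isUnit_iff_isUnit_det _).mp hM.isUnit)
    hd hMv, smul_smul, div_eq_mul_inv]

/-- Iterated smoothing converges to the kernel projection: for L symmetric PSD,
0 < α < 1, and P = α(αI + (1−α)L)⁻¹, the iterates Pᵏx converge to the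
orthogonal projection of x onto ker L. -/
theorem iterated_smoothing_tendsto_kernel_projection
    {N : ℕ} (L : Matrix (Fin N) (Fin N) ℝ) (hL : L.PosSemidef)
    (α : ℝ) (hα : 0 < α) (hα1 : α < 1)
    (P : Matrix (Fin N) (Fin N) ℝ)
    (hP : P = α • (α • (1 : Matrix (Fin N) (Fin N) ℝ) + (1 - α) • L)⁻¹)
    (x : EuclideanSpace ℝ (Fin N)) :
    Tendsto (fun k : ℕ => Matrix.toEuclideanLin (P ^ k) x) atTop
      (nhds ((Submodule.orthogonalProjectionOnto (LinearMap.ker (Matrix.toEuclideanLin L)) x :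
        EuclideanSpace ℝ (Fin N)))) := by
  set b := hL.isHermitian.eigenvectorBasis
  set μ := hL.isHermitian.eigenvalues
  have hLb (i) : toEuclideanLin L (b i) = μ i • b i := by
    rw [toLpLin_apply, hL.isHermitian.mulVec_eigenvectorBasis]
    rfl
  have hPb (i) : toEuclideanLin P (b i) = (α / (α + (1 - α) * μ i)) • b i := by
    rw [toLpLin_apply, hP, hL.smul_inv_mulVec_eq_smul_of_mulVec_eq_smul hα hα1.le
      (hL.eigenvalues_nonneg i) (hL.isHermitian.mulVec_eigenvectorBasis i)]
    rfl
  have hcontr (i) (hi : μ i ≠ 0) : ‖α / (α + (1 - α) * μ i)‖ < 1 :=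
    abs_div_add_one_sub_mul_lt_one hα hα1 ((hL.eigenvalues_nonneg i).lt_of_ne' hi)
  have hproj := (isSymmetric_toEuclideanLin_iff.mpr hL.isHermitian).starProjection_ker_eq_sum
    b μ hLb x
  simp only [Submodule.coe_orthogonalProjectionOnto_apply, hproj, toLpLin_pow]
  nth_rw 1 [← b.sum_repr x]
  exact Module.End.tendsto_pow_apply_sum_smul_of_apply_eq_smul _ b _ hPb (μ · = 0)
    (fun i hi ↦ by simp [hi, hα.ne']) hcontr _
end

section
/- Gradient descent with step size 1/2 on the GSD objective decreases the objective monotonically: for f(H) = α‖H−X‖_F² + (1−α)Tr(HᵀLH) with A symmetric with spectral norm ≤ 1, L = I − A, and 0 < α ≤ 1, the APPNP update H⁺ = (1−α)AH + αX satisfies f(H⁺) ≤ f(H) for every H. -/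
/-!
With `G = α • (H - X) + (1 - α) • (L * H)`, half the gradient of `f` at `H`, the APPNP update is
`H - G`, and the exact second-order expansion of the quadratic `f` gives
`f H - f (H - G) = tr (Gᵀ (2 - K) G)` for the curvature `K = α • 1 + (1 - α) • L`.
Since `L = 1 - A`, `2 - K = α • 1 + (1 - α) • (1 + A)`, which is positive semidefinite.
-/

open Matrix

variable {m n R : Type*} [Fintype m] [Fintype n]

theorem Matrix.trace_transpose_mul_mul_sub_sub [CommRing R] {S : Matrix m m R} (hS : Sᵀ = S)
    (P Q : Matrix m n R) :
    ((P - Q)ᵀ * S * (P - Q)).trace =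
      (Pᵀ * S * P).trace - 2 * (Qᵀ * S * P).trace + (Qᵀ * S * Q).trace := by
  have hcross : (Pᵀ * S * Q).trace = (Qᵀ * S * P).trace := by
    rw [← trace_transpose, transpose_mul, transpose_mul, transpose_transpose, hS, Matrix.mul_assoc]
  simp only [transpose_sub, Matrix.sub_mul, Matrix.mul_sub, trace_sub, hcross]
  ring

theorem Matrix.PosSemidef.trace_transpose_mul_mul_nonneg {S : Matrix m m ℝ} (hS : S.PosSemidef)
    (G : Matrix m n ℝ) : 0 ≤ (Gᵀ * S * G).trace :=
  (hS.conjTranspose_mul_mul_same G).trace_nonneg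

def gsdObjective (α : ℝ) (L : Matrix m m ℝ) (X H : Matrix m n ℝ) : ℝ :=
  α * ((H - X)ᵀ * (H - X)).trace + (1 - α) * (Hᵀ * L * H).trace

theorem gsdObjective_sub [DecidableEq m] {L : Matrix m m ℝ} (hL : Lᵀ = L) (α : ℝ)
    (X H G : Matrix m n ℝ) :
    gsdObjective α L X (H - G) = gsdObjective α L X H
      - 2 * (Gᵀ * (α • (H - X) + (1 - α) • (L * H))).trace
      + (Gᵀ * (α • 1 + (1 - α) • L) * G).trace := by
  have hfidelity := trace_transpose_mul_mul_sub_sub (transpose_one : (1 : Matrix m m ℝ)ᵀ = 1) (H - X) G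
  simp only [Matrix.mul_one] at hfidelity
  rw [gsdObjective, gsdObjective, sub_right_comm H G X, hfidelity, trace_transpose_mul_mul_sub_sub hL]
  simp only [Matrix.mul_add, Matrix.add_mul, Matrix.mul_smul, Matrix.smul_mul, Matrix.mul_one,
    trace_add, trace_smul, Matrix.mul_assoc, smul_eq_mul]
  ring

theorem gsdObjective_sub_halfGradient [DecidableEq m] {L : Matrix m m ℝ} (hL : Lᵀ = L) (α : ℝ)
    (X H : Matrix m n ℝ) {G : Matrix m n ℝ} (hG : α • (H - X) + (1 - α) • (L * H) = G) :
    gsdObjective α L X (H - G) =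
      gsdObjective α L X H - (Gᵀ * (2 • 1 - (α • 1 + (1 - α) • L)) * G).trace := by
  rw [gsdObjective_sub hL, hG, Matrix.mul_sub, Matrix.sub_mul, trace_sub, Matrix.mul_smul,
    Matrix.smul_mul, trace_smul, Matrix.mul_one, nsmul_eq_mul]
  ring

theorem appnp_gradient_step_decreases_objective_general
    {N M : ℕ} (A : Matrix (Fin N) (Fin N) ℝ) (hA : Aᵀ = A)
    (hA2 : ((1 : Matrix (Fin N) (Fin N) ℝ) + A).PosSemidef)
    (L : Matrix (Fin N) (Fin N) ℝ) (hLdef : L = 1 - A)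
    (α : ℝ) (hα : 0 < α) (hα1 : α ≤ 1)
    (X : Matrix (Fin N) (Fin M) ℝ)
    (f : Matrix (Fin N) (Fin M) ℝ → ℝ)
    (hf : ∀ H, f H = α * ((H - X)ᵀ * (H - X)).trace + (1 - α) * (Hᵀ * L * H).trace) :
    ∀ H : Matrix (Fin N) (Fin M) ℝ, f ((1 - α) • (A * H) + α • X) ≤ f H := by
  intro H
  subst hLdef
  have hf' : f = gsdObjective α (1 - A) X := funext hf
  have hstep : (1 - α) • (A * H) + α • X = H - (α • (H - X) + (1 - α) • ((1 - A) * H)) := by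
    simp only [Matrix.sub_mul, Matrix.one_mul]
    module
  have hcurv : (2 • 1 - (α • 1 + (1 - α) • (1 - A)) : Matrix (Fin N) (Fin N) ℝ) =
      α • 1 + (1 - α) • (1 + A) := by module
  have hpsd : (α • 1 + (1 - α) • (1 + A) : Matrix (Fin N) (Fin N) ℝ).PosSemidef :=
    (PosSemidef.one.smul hα.le).add (hA2.smul (sub_nonneg.2 hα1))
  rw [hf', hstep, gsdObjective_sub_halfGradient (by simp [hA]) _ _ _ rfl, hcurv]
  exact sub_le_self _ (hpsd.trace_transpose_mul_mul_nonneg _)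

/-- The APPNP update H⁺ = (1−α)AH + αX (a gradient step of size 1/2) decreases
the GSD objective f(H) = α‖H−X‖_F² + (1−α)Tr(HᵀLH) monotonically, for A
symmetric with spectral norm ≤ 1 (eigenvalues in [−1,1], i.e. I−A and I+A PSD),
L = I − A, and 0 < α ≤ 1. -/
theorem appnp_gradient_step_decreases_objective
    {N M : ℕ} (A : Matrix (Fin N) (Fin N) ℝ) (hA : Aᵀ = A)
    (hA1 : ((1 : Matrix (Fin N) (Fin N) ℝ) - A).PosSemidef)
    (hA2 : ((1 : Matrix (Fin N) (Fin N) ℝ) + A).PosSemidef)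
    (L : Matrix (Fin N) (Fin N) ℝ) (hLdef : L = 1 - A)
    (α : ℝ) (hα : 0 < α) (hα1 : α ≤ 1)
    (X : Matrix (Fin N) (Fin M) ℝ)
    (f : Matrix (Fin N) (Fin M) ℝ → ℝ)
    (hf : ∀ H, f H = α * ((H - X)ᵀ * (H - X)).trace + (1 - α) * (Hᵀ * L * H).trace) :
    ∀ H : Matrix (Fin N) (Fin M) ℝ, f ((1 - α) • (A * H) + α • X) ≤ f H :=
  appnp_gradient_step_decreases_objective_general A hA hA2 L hLdef α hα hα1 X f hf
end
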